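/- Let H be a complex Hilbert space, K(H) the C*-algebra of compact operators on H, W a Hilbert C*-module over K(H), and G a complex normed space. If S : W × W → G is a continuous sesquilinear orthogonality preserving mapping, then there exists a unique linear mapping Φ : ⟨W,W⟩ → G, defined on the linear span ⟨W,W⟩ of all inner products ⟨x,y⟩ with x, y ∈ W, such that S(x, y) = Φ(⟨y, x⟩) for all x, y ∈ W. -/

import Mathlib

/-!
For a unit vector `ξ` and any `η`, the form `(u, v) ↦ S (u ⬝ ξ⊗ξ) (v ⬝ ξ⊗η)` vanishes wherever the
scalar form `(u, v) ↦ ⟪ξ, ⟨v, u⟩ ξ⟫` does, and a complex sesquilinear map vanishing on the zero set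
of a scalar sesquilinear form is a multiple of it. Hence `S (x ⬝ ξ⊗ξ) (y ⬝ η⊗η)` depends linearly
on `⟨y, x⟩`, so `∑ c_k S (x_k P) (y_k Q) = 0` whenever `∑ c_k ⟨y_k, x_k⟩ = 0`, for finite sums
`P`, `Q` of such rank one projections. Since `⟨x, x⟩` is compact, `x P → x` as `P` runs through
finite rank projections (`‖x - x P‖² ≤ ‖(1 - P) ⟨x, x⟩‖`), and by continuity the relation passes
to `∑ c_k S x_k y_k = 0`. This is exactly the well-definedness of `Φ ⟨y, x⟩ := S x y` on the span.
-/

open Metric ContinuousLinearMap in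
/-- **Schauder's theorem** for Hilbert space: the adjoint of a compact operator is compact. -/
theorem IsCompactOperator.star_clm {H : Type*} [NormedAddCommGroup H] [InnerProductSpace ℂ H]
    [CompleteSpace H] {f : H →L[ℂ] H} (hf : IsCompactOperator f) :
    IsCompactOperator ⇑(star f) := by
  have hA : IsCompactOperator ⇑(f ∘L (star f)) := by
    convert hf.comp_clm (star f) using 1 <;> first | rfl | simp
  have goal_iff := isCompactOperator_iff_isCompact_closure_image_closedBall
    ((star f : H →L[ℂ] H) : H →ₗ[ℂ] H) zero_lt_one
  refine goal_iff.mpr (TotallyBounded.isCompact_of_isClosed ?_ isClosed_closure)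
  refine TotallyBounded.closure ?_
  rw [Metric.totallyBounded_iff]
  intro ε hε
  set A := f ∘L (star f) with hAdef
  have hAtb : TotallyBounded (⇑A '' closedBall 0 1) := by
    have h1 := (isCompactOperator_iff_isCompact_closure_image_closedBall
      ((A : H →L[ℂ] H) : H →ₗ[ℂ] H) zero_lt_one).mp hA
    exact h1.totallyBounded.subset subset_closure
  obtain ⟨t, htsub, htfin, hcov⟩ := totallyBounded_iff_subset.mp hAtb
      {p : H × H | dist p.1 p.2 < ε ^ 2 / 8} (Metric.dist_mem_uniformity (by positivity))
  -- choose preimages of the centers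
  have hchoice : ∀ y ∈ t, ∃ u ∈ closedBall (0 : H) 1, A u = y := fun y hy => by
    obtain ⟨u, hu, hu'⟩ := htsub hy
    exact ⟨u, hu, hu'⟩
  classical
  choose u hu hAu using hchoice
  refine ⟨(fun y => if hy : y ∈ t then star f (u y hy) else 0) '' t, htfin.image _, ?_⟩
  rintro w ⟨x, hx, rfl⟩
  obtain ⟨y, hy, hdy⟩ : ∃ y ∈ t, dist (A x) y < ε ^ 2 / 8 := by
    have := hcov ⟨x, hx, rfl⟩
    simp only [Set.mem_iUnion, Set.mem_setOf_eq] at this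
    obtain ⟨y, hy, hd⟩ := this
    exact ⟨y, hy, hd⟩
  simp only [Set.mem_iUnion, mem_ball]
  refine ⟨star f (u y hy), ⟨y, hy, by simp [hy]⟩, ?_⟩
  -- estimate
  set z := x - u y hy with hz
  have hznorm : ‖z‖ ≤ 2 := by
    have h1 : ‖x‖ ≤ 1 := by simpa using hx
    have h2 : ‖u y hy‖ ≤ 1 := by simpa using hu y hy
    calc ‖z‖ ≤ ‖x‖ + ‖u y hy‖ := norm_sub_le _ _
    _ ≤ 2 := by linarith
  have hAz : ‖A z‖ < ε ^ 2 / 8 := by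
    have : A z = A x - y := by rw [hz, map_sub, hAu y hy]
    rw [this, ← dist_eq_norm]
    exact hdy
  have hkey : ‖star f z‖ ^ 2 ≤ ‖z‖ * ‖A z‖ := by
    have h1 : ‖star f z‖ ^ 2 = RCLike.re (inner ℂ (star f z) (star f z)) := by
      rw [← @norm_sq_eq_re_inner ℂ]
    have h2 : inner ℂ (star f z) (star f z) = inner ℂ z (A z) := by
      rw [star_eq_adjoint]
      rw [adjoint_inner_left]
      rfl
    have h3 : RCLike.re (inner ℂ z (A z)) ≤ ‖inner ℂ z (A z)‖ := RCLike.re_le_norm _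
    have h4 : ‖inner ℂ z (A z)‖ ≤ ‖z‖ * ‖A z‖ := norm_inner_le_norm _ _
    rw [h1, h2]
    exact h3.trans h4
  have hfz : ‖star f z‖ ^ 2 < ε ^ 2 / 4 := by
    have hAz0 : 0 ≤ ‖A z‖ := norm_nonneg _
    nlinarith [hkey, hznorm, hAz, norm_nonneg z]
  have : dist (star f x) (star f (u y hy)) = ‖star f z‖ := by
    rw [dist_eq_norm, ← map_sub, hz]
  show dist ((star f) x) ((star f) (u y hy)) < ε
  rw [this]
  nlinarith [norm_nonneg ((star f) z), hfz, hε]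

noncomputable section

variable (H : Type*) [NormedAddCommGroup H] [InnerProductSpace ℂ H] [CompleteSpace H]

/-- The compact operators on the Hilbert space `H`, as a non-unital star subalgebra
of `H →L[ℂ] H`. -/
def compactStarAlgebra : NonUnitalStarSubalgebra ℂ (H →L[ℂ] H) where
  carrier := {T : H →L[ℂ] H | IsCompactOperator T}
  add_mem' hf hg := hf.add hg
  zero_mem' := isCompactOperator_zero
  smul_mem' c _ hf := hf.smul c
  mul_mem' {f g} hf _ := by simpa [Function.comp_def] using hf.comp_clm g
  star_mem' {f} hf := hf.star_clm

/-- `K(H)`, the C*-algebra of compact operators on the Hilbert space `H`. -/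
abbrev KH := ↥(compactStarAlgebra H)

instance : CStarRing (KH H) where
  norm_mul_self_le x := by simpa using CStarRing.norm_mul_self_le (x : H →L[ℂ] H)

instance : CompleteSpace (KH H) :=
  (isClosed_setOf_isCompactOperator (σ₁₂ := RingHom.id ℂ) (M₁ := H) (M₂ := H)).completeSpace_coe

variable {H}

/-- The rank one operator `ξ ⊗ η : ν ↦ (ν, η)ξ` (inner product linear in the first slot,
i.e. `(ν, η) = ⟪η, ν⟫` in Mathlib's convention). -/
def rankOneOp (ξ η : H) : H →L[ℂ] H := (innerSL ℂ η).smulRight ξ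

set_option linter.unusedSectionVars false in
theorem isCompactOperator_rankOneOp (ξ η : H) : IsCompactOperator ⇑(rankOneOp ξ η) := by
  refine (isCompactOperator_iff_image_closedBall_subset_compact
    ((rankOneOp ξ η : H →L[ℂ] H) : H →ₗ[ℂ] H) zero_lt_one).mpr ?_
  refine ⟨(fun c : ℂ => c • ξ) '' Metric.closedBall 0 ‖η‖,
    (isCompact_closedBall 0 ‖η‖).image (by fun_prop), ?_⟩
  rintro x ⟨ν, hν, rfl⟩
  refine ⟨inner ℂ η ν, ?_, rfl⟩
  simp only [Metric.mem_closedBall, dist_zero_right] at hν ⊢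
  calc ‖inner ℂ η ν‖ ≤ ‖η‖ * ‖ν‖ := norm_inner_le_norm η ν
  _ ≤ ‖η‖ := by nlinarith [norm_nonneg (η : H)]

/-- The rank one operator `ξ ⊗ η` as an element of `K(H)`. -/
def KH.rankOne (ξ η : H) : KH H := ⟨rankOneOp ξ η, isCompactOperator_rankOneOp ξ η⟩

/-- A Hilbert C*-module structure on `W` over a C*-algebra `A`: a right `A`-action `smul`
and an `A`-valued inner product `inner` satisfying the usual axioms, whose induced norm
`‖⟨x,x⟩‖ ^ (1/2)` coincides with the (complete) norm of `W`.  Positivity `⟨x,x⟩ ≥ 0` is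
encoded through its C*-algebraic characterization `∃ b, ⟨x,x⟩ = b* ⬝ b`. -/
structure HilbertModule (A : Type*) (W : Type*)
    [NonUnitalNormedRing A] [StarRing A] [CStarRing A] [NormedSpace ℂ A]
    [IsScalarTower ℂ A A] [SMulCommClass ℂ A A] [StarModule ℂ A] [CompleteSpace A]
    [NormedAddCommGroup W] [NormedSpace ℂ W] [CompleteSpace W] : Type _ where
  smul : W → A → W
  inner : W → W → A
  add_smul' : ∀ x y a, smul (x + y) a = smul x a + smul y a
  smul_add' : ∀ x a b, smul x (a + b) = smul x a + smul x b
  smul_assoc' : ∀ x a b, smul (smul x a) b = smul x (a * b)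
  smul_complex₁ : ∀ (c : ℂ) x a, smul (c • x) a = c • smul x a
  smul_complex₂ : ∀ (c : ℂ) x a, smul x (c • a) = c • smul x a
  inner_add_left : ∀ x y z, inner (x + y) z = inner x z + inner y z
  inner_add_right : ∀ x y z, inner x (y + z) = inner x y + inner x z
  inner_smul_right : ∀ x y a, inner x (smul y a) = inner x y * a
  inner_smul_complex : ∀ (c : ℂ) x y, inner x (c • y) = c • inner x y
  star_inner : ∀ x y, star (inner x y) = inner y x
  inner_self_nonneg : ∀ x, ∃ a, inner x x = star a * a
  inner_self_eq_zero : ∀ x, inner x x = 0 ↔ x = 0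
  norm_sq_eq : ∀ x, ‖x‖ ^ 2 = ‖inner x x‖

/-- A minimal projection in an algebra `A`: a nonzero self-adjoint idempotent `e`
with `e ⬝ A ⬝ e = ℂ ⬝ e`. -/
def IsMinimalProjection {A : Type*} [NonUnitalNormedRing A] [StarRing A] [NormedSpace ℂ A]
    (e : A) : Prop :=
  star e = e ∧ e * e = e ∧ e ≠ 0 ∧ ∀ a : A, ∃ c : ℂ, e * a * e = c • e

/-- An orthonormal basis `{w i}` of a Hilbert C*-module: each `⟨wᵢ, wᵢ⟩` is a minimal
projection, `⟨wᵢ, wⱼ⟩ = 0` for `i ≠ j`, and the submodule generated by the `wᵢ`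
is dense in `W`. -/
def HilbertModule.IsOrthonormalBasis {A W : Type*}
    [NonUnitalNormedRing A] [StarRing A] [CStarRing A] [NormedSpace ℂ A]
    [IsScalarTower ℂ A A] [SMulCommClass ℂ A A] [StarModule ℂ A] [CompleteSpace A]
    [NormedAddCommGroup W] [NormedSpace ℂ W] [CompleteSpace W]
    (M : HilbertModule A W) {ι : Type*} (w : ι → W) : Prop :=
  (∀ i, IsMinimalProjection (M.inner (w i) (w i))) ∧
  (∀ i j, i ≠ j → M.inner (w i) (w j) = 0) ∧
  closure (↑(Submodule.span ℂ
      (Set.range w ∪ {x | ∃ (i : ι) (a : A), M.smul (w i) a = x})) : Set W) = Set.univ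

namespace LinearMap

variable {E F : Type*} [AddCommGroup E] [Module ℂ E] [AddCommGroup F] [Module ℂ F]

theorem eq_zero_of_forall_apply_self_eq_zero {B : E →ₗ[ℂ] E →ₗ⋆[ℂ] F}
    (h : ∀ a, B a a = 0) : B = 0 := by
  ext a b
  have hadd : B a b + B b a = 0 := by simpa [h] using h (a + b)
  have hI : -Complex.I • B a b + Complex.I • B b a = 0 := by
    simpa [h, smul_smul] using h (a + Complex.I • b)
  rw [zero_apply, zero_apply]
  linear_combination (norm := skip) (1 / 2 : ℂ) • hadd + (Complex.I / 2) • hI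
  match_scalars <;> ring_nf <;> simp [Complex.I_sq]

theorem apply_add_smul_add_smul (B : E →ₗ[ℂ] E →ₗ⋆[ℂ] F) {a b e : E}
    (ha : B a e = 0) (hb : B e b = 0) (α β : ℂ) :
    B (a + α • e) (b + β • e) = B a b + (α * starRingEnd ℂ β) • B e e := by
  simp [ha, hb, smul_smul]

theorem exists_forall_apply_eq_smul_of_apply_eq_zero (B : E →ₗ[ℂ] E →ₗ⋆[ℂ] ℂ)
    (S : E →ₗ[ℂ] E →ₗ⋆[ℂ] F) (hS : ∀ a b, B a b = 0 → S a b = 0) :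
    ∃ g : F, ∀ a b, S a b = B a b • g := by
  by_cases hB : ∀ a, B a a = 0
  · refine ⟨0, fun a b => ?_⟩
    rw [hS a b (by simp [eq_zero_of_forall_apply_self_eq_zero hB]), smul_zero]
  obtain ⟨e, he⟩ := not_forall.mp hB
  set r := B e e
  -- If `B a e = 0 = B e b`, then `B` vanishes at `(a + e, b + γ • e)` for a suitable `γ`.
  have horth : ∀ a b, B a e = 0 → B e b = 0 → S a b = B a b • r⁻¹ • S e e := by
    intro a b ha hb
    have hzero : B (a + (1 : ℂ) • e) (b + starRingEnd ℂ (-(B a b / r)) • e) = 0 := by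
      rw [apply_add_smul_add_smul B ha hb]
      simp [r, he]
    have := hS _ _ hzero
    rw [apply_add_smul_add_smul S (hS _ _ ha) (hS _ _ hb)] at this
    rw [smul_smul, ← div_eq_mul_inv]
    simpa [add_eq_zero_iff_eq_neg] using this
  refine ⟨r⁻¹ • S e e, fun a b => ?_⟩
  -- Split off the components of `a` and `b` along `e`.
  set α := B a e / r
  set β := starRingEnd ℂ (B e b / r)
  have ha : B (a - α • e) e = 0 := by simp [α, r, he]
  have hb : B e (b - β • e) = 0 := by simp [β, r, he]
  have hSab := apply_add_smul_add_smul S (hS _ _ ha) (hS _ _ hb) α β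
  have hBab := apply_add_smul_add_smul B ha hb α β
  simp only [sub_add_cancel] at hSab hBab
  rw [hSab, hBab, horth _ _ ha hb, add_smul]
  congr 1
  simp [r, smul_smul, mul_assoc, he]

end LinearMap

namespace Submodule

theorem existsUnique_linearMap_span_of_linearCombination_eq_zero {R M N ι : Type*} [Ring R]
    [AddCommGroup M] [Module R M] [AddCommGroup N] [Module R N]
    {v : ι → M} {s : Set M} (hs : Set.range v = s) (T : ι → N)
    (h : ∀ f : ι →₀ R, Finsupp.linearCombination R v f = 0 →
      Finsupp.linearCombination R T f = 0) :
    ∃! Φ : span R s →ₗ[R] N, ∀ i, Φ ⟨v i, subset_span (hs ▸ Set.mem_range_self i)⟩ = T i := by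
  subst hs
  set π : (ι →₀ R) →ₗ[R] span R (Set.range v) :=
    (Finsupp.linearCombination R v).codRestrict _ fun f => by
      rw [← Finsupp.range_linearCombination]; exact LinearMap.mem_range_self _ f
  have hπ : ∀ i, π (Finsupp.single i 1) = ⟨v i, subset_span (Set.mem_range_self i)⟩ := by
    intro i; ext; simp [π]
  have hsurj : Function.Surjective π := by
    rintro ⟨a, ha⟩
    rw [← Finsupp.range_linearCombination] at ha
    obtain ⟨f, rfl⟩ := ha
    exact ⟨f, rfl⟩
  have hker : LinearMap.ker π ≤ LinearMap.ker (Finsupp.linearCombination R T) := fun f hf =>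
    h f (congrArg Subtype.val hf)
  set Φ := (LinearMap.ker π).liftQ _ hker ∘ₗ (π.quotKerEquivOfSurjective hsurj).symm.toLinearMap
  have hΦ : Φ ∘ₗ π = Finsupp.linearCombination R T := by
    refine LinearMap.ext fun f => ?_
    have : (π.quotKerEquivOfSurjective hsurj).symm (π f) = Submodule.Quotient.mk f :=
      (LinearEquiv.symm_apply_eq _).2 rfl
    simp [Φ, this]
  have hcomp : ∀ Ψ : span R (Set.range v) →ₗ[R] N,
      (∀ i, Ψ ⟨v i, subset_span (Set.mem_range_self i)⟩ = T i) →
      Ψ ∘ₗ π = Finsupp.linearCombination R T := fun Ψ hΨ =>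
    Finsupp.lhom_ext' fun i => LinearMap.ext_ring (by simp [hπ, hΨ])
  refine ⟨Φ, fun i => ?_, fun Ψ hΨ => (LinearMap.cancel_right hsurj).1 ((hcomp Ψ hΨ).trans hΦ.symm)⟩
  rw [← hπ, ← LinearMap.comp_apply, hΦ]
  simp

end Submodule

section CompactApprox

variable {𝕜 E F : Type*} [RCLike 𝕜] [NormedAddCommGroup E] [NormedSpace 𝕜 E]
  [NormedAddCommGroup F] [InnerProductSpace 𝕜 F]

theorem ContinuousLinearMap.norm_sub_starProjection_comp_le (T : E →L[𝕜] F)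
    {U : Submodule 𝕜 F} [U.HasOrthogonalProjection] {C : Set F} (hCU : C ⊆ U) {ε : ℝ}
    (hε : 0 ≤ ε) (hT : T '' Metric.closedBall 0 1 ⊆ ⋃ y ∈ C, Metric.ball y ε) :
    ‖T - U.starProjection ∘L T‖ ≤ ε := by
  refine opNorm_le_of_unit_norm hε fun x hx => ?_
  obtain ⟨y, hy, hxy⟩ := Set.mem_iUnion₂.1 (hT ⟨x, by simp [hx], rfl⟩)
  calc ‖T x - U.starProjection (T x)‖ = ⨅ z : U, ‖T x - z‖ := Submodule.starProjection_minimal _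
    _ ≤ ‖T x - y‖ :=
      ciInf_le ⟨0, Set.forall_mem_range.2 fun _ => norm_nonneg _⟩ (⟨y, hCU hy⟩ : U)
    _ ≤ ε := (mem_ball_iff_norm.1 hxy).le

theorem exists_finiteDimensional_norm_sub_starProjection_comp_le {ι : Type*} [Finite ι]
    {T : ι → E →L[𝕜] F} (hT : ∀ k, IsCompactOperator (T k)) {ε : ℝ} (hε : 0 < ε) :
    ∃ (U : Submodule 𝕜 F) (_ : FiniteDimensional 𝕜 U),
      ∀ k, ‖T k - U.starProjection ∘L T k‖ ≤ ε := by
  choose C _ hC hcover using fun k =>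
    exists_finite_cover_balls_of_isCompact_closure ((hT k).isCompact_closure_image_closedBall 1) hε
  have := FiniteDimensional.span_of_finite 𝕜 (Set.finite_iUnion hC)
  exact ⟨_, this, fun k => (T k).norm_sub_starProjection_comp_le
    ((Set.subset_iUnion C k).trans Submodule.subset_span) hε.le (hcover k)⟩

end CompactApprox

namespace HilbertModule

variable {A W : Type*} [NonUnitalNormedRing A] [StarRing A] [CStarRing A] [NormedSpace ℂ A]
  [IsScalarTower ℂ A A] [SMulCommClass ℂ A A] [StarModule ℂ A] [CompleteSpace A]
  [NormedAddCommGroup W] [NormedSpace ℂ W] [CompleteSpace W] (M : HilbertModule A W)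

theorem inner_smul_left (x y : W) (a : A) : M.inner (M.smul x a) y = star a * M.inner x y := by
  rw [← M.star_inner, M.inner_smul_right, star_mul, M.star_inner]

theorem inner_smul_complex_left (c : ℂ) (x y : W) :
    M.inner (c • x) y = starRingEnd ℂ c • M.inner x y := by
  rw [← M.star_inner, M.inner_smul_complex, star_smul, M.star_inner, starRingEnd_apply]

def innerₛₗ : W →ₗ⋆[ℂ] W →ₗ[ℂ] A :=
  LinearMap.mk₂'ₛₗ _ _ M.inner M.inner_add_left M.inner_smul_complex_left M.inner_add_right
    M.inner_smul_complex

theorem inner_sub_left (x y z : W) : M.inner (x - y) z = M.inner x z - M.inner y z :=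
  LinearMap.map_sub₂ M.innerₛₗ x y z

theorem inner_sub_right (x y z : W) : M.inner x (y - z) = M.inner x y - M.inner x z :=
  map_sub (M.innerₛₗ x) y z

@[simps]
def smulRightₗ (a : A) : W →ₗ[ℂ] W where
  toFun x := M.smul x a
  map_add' x y := M.add_smul' x y a
  map_smul' c x := M.smul_complex₁ c x a

theorem smul_sum {ι : Type*} (x : W) (s : Finset ι) (a : ι → A) :
    M.smul x (∑ i ∈ s, a i) = ∑ i ∈ s, M.smul x (a i) :=
  map_sum (AddMonoidHom.mk' (M.smul x) (M.smul_add' x)) a s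

end HilbertModule

open scoped InnerProductSpace

namespace KH

@[simp]
theorem coe_rankOne (ξ η : H) :
    (KH.rankOne ξ η : H →L[ℂ] H) = InnerProductSpace.rankOne ℂ ξ η :=
  rfl

theorem star_rankOne (ξ η : H) : star (KH.rankOne ξ η) = KH.rankOne η ξ :=
  Subtype.ext (by simp [ContinuousLinearMap.star_eq_adjoint])

theorem rankOne_mul_rankOne (a b c d : H) :
    KH.rankOne a b * KH.rankOne c d = ⟪b, c⟫_ℂ • KH.rankOne a d :=
  Subtype.ext (InnerProductSpace.rankOne_comp_rankOne a b c d)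

theorem rankOne_mul_mul_rankOne (a b c d : H) (T : KH H) :
    KH.rankOne a b * T * KH.rankOne c d = ⟪b, (T : H →L[ℂ] H) c⟫_ℂ • KH.rankOne a d := by
  ext x
  simp [smul_smul, mul_comm]

end KH

namespace HilbertModule

variable {W G : Type*} [NormedAddCommGroup W] [NormedSpace ℂ W] [CompleteSpace W]
  (M : HilbertModule (KH H) W)

theorem exists_apply_smul_rankOne_eq_inner_smul [AddCommGroup G] [Module ℂ G]
    (S : W →ₗ[ℂ] W →ₗ⋆[ℂ] G) (hS : ∀ x y, M.inner x y = 0 → S x y = 0) {ξ : H} (hξ : ‖ξ‖ = 1)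
    (η : H) :
    ∃ g : G, ∀ u w, S (M.smul u (KH.rankOne ξ ξ)) (M.smul w (KH.rankOne η η)) =
      ⟪η, (M.inner w u : H →L[ℂ] H) ξ⟫_ℂ • g := by
  have hξξ : ⟪ξ, ξ⟫_ℂ = 1 := by simp [hξ]
  let B : W →ₗ[ℂ] W →ₗ⋆[ℂ] ℂ := LinearMap.mk₂'ₛₗ _ _
    (fun u v => ⟪ξ, (M.inner v u : H →L[ℂ] H) ξ⟫_ℂ)
    (by simp [M.inner_add_right]) (by simp [M.inner_smul_complex])
    (by simp [M.inner_add_left]) (by simp [M.inner_smul_complex_left])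
  let S' : W →ₗ[ℂ] W →ₗ⋆[ℂ] G :=
    (S ∘ₗ M.smulRightₗ (KH.rankOne ξ ξ)).compl₂ (M.smulRightₗ (KH.rankOne ξ η))
  obtain ⟨g, hg⟩ := LinearMap.exists_forall_apply_eq_smul_of_apply_eq_zero B S'
    fun u v huv => hS _ _ <| by
      change ⟪ξ, (M.inner v u : H →L[ℂ] H) ξ⟫_ℂ = 0 at huv
      change M.inner (M.smul u _) (M.smul v _) = 0
      rw [← star_eq_zero, M.star_inner, M.inner_smul_right, M.inner_smul_left, KH.star_rankOne,
        KH.rankOne_mul_mul_rankOne, huv, zero_smul]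
  refine ⟨g, fun u w => ?_⟩
  have hw : M.smul w (KH.rankOne η η) =
      M.smul (M.smul w (KH.rankOne η ξ)) (KH.rankOne ξ η) := by
    rw [M.smul_assoc', KH.rankOne_mul_rankOne, hξξ, one_smul]
  rw [hw]
  refine (hg u _).trans ?_
  simp [B, M.inner_smul_left, KH.star_rankOne, hξ]

theorem norm_sub_smul_sq_le (z : W) {P : KH H} (hP : IsStarProjection (P : H →L[ℂ] H)) :
    ‖z - M.smul z P‖ ^ 2 ≤ ‖(M.inner z z : H →L[ℂ] H) - P * M.inner z z‖ := by
  have hPstar : star P = P := Subtype.ext hP.isSelfAdjoint.star_eq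
  set A := M.inner z z
  -- `1 - P` only makes sense in the unitization `H →L[ℂ] H` of `K(H)`
  have hinner : ((M.inner (z - M.smul z P) (z - M.smul z P) : KH H) : H →L[ℂ] H) =
      ((A : H →L[ℂ] H) - P * A) * (1 - P) := by
    rw [M.inner_sub_left, M.inner_sub_right, M.inner_sub_right, M.inner_smul_right,
      M.inner_smul_left, M.inner_smul_left, M.inner_smul_right, hPstar]
    push_cast
    noncomm_ring
  calc ‖z - M.smul z P‖ ^ 2 = ‖((A : H →L[ℂ] H) - P * A) * (1 - P)‖ := by
        rw [M.norm_sq_eq, ← hinner]; rfl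
    _ ≤ ‖(A : H →L[ℂ] H) - P * A‖ * ‖1 - (P : H →L[ℂ] H)‖ := norm_mul_le _ _
    _ ≤ ‖(A : H →L[ℂ] H) - P * A‖ :=
        mul_le_of_le_one_right (norm_nonneg _) (IsStarProjection.norm_le _ hP.one_sub)

theorem exists_orthonormal_norm_sub_smul_sum_rankOne_le {ι : Type*} [Finite ι] (z : ι → W)
    {ε : ℝ} (hε : 0 < ε) :
    ∃ (n : ℕ) (ξ : Fin n → H), Orthonormal ℂ ξ ∧
      ∀ k, ‖z k - M.smul (z k) (∑ i, KH.rankOne (ξ i) (ξ i))‖ ≤ ε := by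
  obtain ⟨U, _, hU⟩ := exists_finiteDimensional_norm_sub_starProjection_comp_le
    (fun k => (M.inner (z k) (z k)).2) (pow_pos hε 2)
  let b := stdOrthonormalBasis ℂ U
  refine ⟨_, fun i => b i, b.orthonormal.comp_linearIsometry U.subtypeₗᵢ, fun k => ?_⟩
  have hP : ((∑ i, KH.rankOne (b i : H) (b i) : KH H) : H →L[ℂ] H) = U.starProjection := by
    simp [b.starProjection_eq_sum_rankOne]
  refine (pow_le_pow_iff_left₀ (norm_nonneg _) hε.le two_ne_zero).1 <|
    (M.norm_sub_smul_sq_le (z k) (hP ▸ isStarProjection_starProjection)).trans ?_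
  simpa only [hP, ContinuousLinearMap.mul_def] using hU k

theorem sum_smul_apply_smul_sum_rankOne_eq_zero [AddCommGroup G] [Module ℂ G]
    (S : W →ₗ[ℂ] W →ₗ⋆[ℂ] G) (hS : ∀ x y, M.inner x y = 0 → S x y = 0)
    {ι κ₁ κ₂ : Type*} [Fintype ι] [Fintype κ₁] [Fintype κ₂] {ξ : κ₁ → H} (hξ : ∀ i, ‖ξ i‖ = 1)
    (η : κ₂ → H) (c : ι → ℂ) (x y : ι → W) (h : ∑ k, c k • M.inner (y k) (x k) = 0) :
    ∑ k, c k • S (M.smul (x k) (∑ i, KH.rankOne (ξ i) (ξ i)))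
      (M.smul (y k) (∑ j, KH.rankOne (η j) (η j))) = 0 := by
  simp only [M.smul_sum, map_sum, LinearMap.sum_apply, Finset.smul_sum]
  rw [Finset.sum_comm]
  refine Finset.sum_eq_zero fun j _ => ?_
  rw [Finset.sum_comm]
  refine Finset.sum_eq_zero fun i _ => ?_
  obtain ⟨g, hg⟩ := M.exists_apply_smul_rankOne_eq_inner_smul S hS (hξ i) (η j)
  simp only [hg, smul_smul, ← Finset.sum_smul]
  have hsum : ∑ k, c k * ⟪η j, (M.inner (y k) (x k) : H →L[ℂ] H) (ξ i)⟫_ℂ = 0 := by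
    simpa using congrArg (fun T : KH H => ⟪η j, (T : H →L[ℂ] H) (ξ i)⟫_ℂ) h
  rw [hsum, zero_smul]

theorem sum_smul_apply_eq_zero_of_sum_smul_inner_eq_zero [NormedAddCommGroup G] [NormedSpace ℂ G]
    (S : W →ₗ[ℂ] W →ₗ⋆[ℂ] G) (hScont : Continuous fun p : W × W => S p.1 p.2)
    (hS : ∀ x y, M.inner x y = 0 → S x y = 0) {ι : Type*} [Fintype ι] (c : ι → ℂ)
    (x y : ι → W) (h : ∑ k, c k • M.inner (y k) (x k) = 0) :
    ∑ k, c k • S (x k) (y k) = 0 := by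
  let F : (ι → W) × (ι → W) → G := fun p => ∑ k, c k • S (p.1 k) (p.2 k)
  have hF : Continuous F := continuous_finsetSum _ fun k _ =>
    (hScont.comp (f := fun p : (ι → W) × (ι → W) => (p.1 k, p.2 k)) (by fun_prop)).const_smul _
  -- `(x, y)` is a limit of compressions `(x P, y Q)`, on which `F` vanishes
  change F (x, y) = 0
  refine (isClosed_eq hF continuous_const).closure_subset
    (Metric.mem_closure_iff.2 fun ε hε => ?_)
  obtain ⟨_, ξ, hξ, hx⟩ := M.exists_orthonormal_norm_sub_smul_sum_rankOne_le x (half_pos hε)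
  obtain ⟨_, η, -, hy⟩ := M.exists_orthonormal_norm_sub_smul_sum_rankOne_le y (half_pos hε)
  refine ⟨(fun k => M.smul (x k) (∑ i, KH.rankOne (ξ i) (ξ i)),
    fun k => M.smul (y k) (∑ j, KH.rankOne (η j) (η j))),
    M.sum_smul_apply_smul_sum_rankOne_eq_zero S hS hξ.1 η c x y h, ?_⟩
  refine (max_le (dist_pi_le_iff (half_pos hε).le |>.2 fun k => ?_)
    (dist_pi_le_iff (half_pos hε).le |>.2 fun k => ?_)).trans_lt (half_lt_self hε)
  · rw [dist_eq_norm]; exact hx k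
  · rw [dist_eq_norm]; exact hy k

end HilbertModule

/-- Proposition 4.3, first part.
Let `W` be a Hilbert C*-module over `K(H)` and `G` a complex normed space.  If
`S : W × W → G` is a continuous sesquilinear orthogonality preserving mapping, then there
is a unique linear `Φ : ⟨W,W⟩ → G` (on the linear span of all inner products) such that
`S(x,y) = Φ(⟨y,x⟩)` for all `x, y ∈ W`. -/
theorem sesquilinear_orthogonality_preserving_representation
    {H : Type*} [NormedAddCommGroup H] [InnerProductSpace ℂ H] [CompleteSpace H]
    {W : Type*} [NormedAddCommGroup W] [NormedSpace ℂ W] [CompleteSpace W]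
    (M : HilbertModule (KH H) W)
    {G : Type*} [NormedAddCommGroup G] [NormedSpace ℂ G]
    (S : W → W → G)
    (hScont : Continuous (fun p : W × W => S p.1 p.2))
    (hSadd₁ : ∀ x y z : W, S (x + y) z = S x z + S y z)
    (hSadd₂ : ∀ x y z : W, S x (y + z) = S x y + S x z)
    (hSsmul₁ : ∀ (c : ℂ) (x y : W), S (c • x) y = c • S x y)
    (hSsmul₂ : ∀ (c : ℂ) (x y : W), S x (c • y) = (starRingEnd ℂ) c • S x y)
    (hSperp : ∀ x y : W, M.inner x y = 0 → S x y = 0) :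
    ∃! Φ : ↥(Submodule.span ℂ {a : KH H | ∃ x y : W, M.inner x y = a}) →ₗ[ℂ] G,
      ∀ x y : W, S x y = Φ ⟨M.inner y x, Submodule.subset_span ⟨y, x, rfl⟩⟩ := by
  let Sₗ : W →ₗ[ℂ] W →ₗ⋆[ℂ] G := LinearMap.mk₂'ₛₗ _ _ S hSadd₁ hSsmul₁ hSadd₂ hSsmul₂
  have hrange : Set.range (fun p : W × W => M.inner p.1 p.2) = {a | ∃ x y, M.inner x y = a} := by
    ext; simp
  obtain ⟨Φ, hΦ, huniq⟩ := Submodule.existsUnique_linearMap_span_of_linearCombination_eq_zero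
    hrange (fun p => S p.2 p.1) fun f hf => by
      simp only [Finsupp.linearCombination_apply, Finsupp.sum] at hf ⊢
      rw [← Finset.sum_coe_sort] at hf ⊢
      exact M.sum_smul_apply_eq_zero_of_sum_smul_inner_eq_zero Sₗ hScont hSperp _ _ _ hf
  exact ⟨Φ, fun x y => (hΦ (y, x)).symm, fun Ψ hΨ => huniq Ψ fun p => (hΨ p.2 p.1).symm⟩
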